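/- Let $U_q$ be the set of $q$-element subsets of $[n]$ and let $a_Z \geq 0$ for each $Z \in U_q$. For each integer $\ell$ with $0 \leq \ell \leq q$, define $\mu_\ell = \max_{Y \in U_\ell} \sum_{Z \in U_q, Z \supseteq Y} a_Z$. Then for any integer $w \geq 0$ and real $p \geq 0$, $\sum_{Z_1, \dots, Z_w \in U_q} a_{Z_1} \cdots a_{Z_w} \, p^{|Z_1 \cup \cdots \cup Z_w|} \leq \left( \sum_{k=0}^q \binom{wq}{k} \mu_k p^{q-k} \right)^w$. -/

import Mathlib

open Finset

/-- The maximum, over `ℓ`-element subsets `Y` of `[n]`, of the sum of `a Z` over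
`q`-element subsets `Z ⊇ Y` (taken as `0` if there are no `ℓ`-element subsets). -/
noncomputable def polyMu (n q : ℕ) (a : Finset (Fin n) → ℝ) (ℓ : ℕ) : ℝ :=
  WithBot.unbotD 0 ((Finset.powersetCard ℓ (Finset.univ : Finset (Fin n))).image fun Y =>
    ∑ Z ∈ (Finset.powersetCard q (Finset.univ : Finset (Fin n))).filter
      (fun Z => Y ⊆ Z), a Z).max

/-!
Peel the tuple off one set at a time. If `U` is the union of the first `j < w` sets, then
`#U ≤ wq`, and a new set `Z` multiplies the weight by `a Z * p ^ #(Z \ U)`. Grouping the `Z` by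
`Y = Z ∩ U` of size `k`, each group contributes `p ^ (q - k)` times at most `μ_k`, and there are at
most `(wq).choose k` such `Y`; so each new set costs at most the bracket on the right-hand side.
-/

lemma Fintype.sum_piFinset_const_succ {β M : Type*} [AddCommMonoid M] (S : Finset β) (j : ℕ)
    (F : (Fin (j + 1) → β) → M) :
    ∑ Z ∈ Fintype.piFinset (fun _ : Fin (j + 1) => S), F Z =
      ∑ z ∈ S, ∑ Z ∈ Fintype.piFinset (fun _ : Fin j => S), F (Fin.cons z Z) := by
  have h := filter_piFinset_eq_map_consEquiv (fun _ : Fin (j + 1) => S) fun _ => True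
  rw [filter_true] at h
  rw [h, sum_map, sum_product]
  simp only [filter_true]
  rfl

lemma Finset.biUnion_univ_cons {β : Type*} [DecidableEq β] {j : ℕ} (z : Finset β)
    (Z : Fin j → Finset β) :
    univ.biUnion (Fin.cons z Z : Fin (j + 1) → Finset β) = z ∪ univ.biUnion Z := by
  ext
  simp [Fin.exists_fin_succ]

section

variable {n q : ℕ} (a : Finset (Fin n) → ℝ)

lemma polyMu_nonneg (ha : ∀ Z, 0 ≤ a Z) (ℓ : ℕ) : 0 ≤ polyMu n q a ℓ := by
  unfold polyMu
  cases hmax : ((powersetCard ℓ (univ : Finset (Fin n))).image fun Y =>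
      ∑ Z ∈ powersetCard q univ with Y ⊆ Z, a Z).max with
  | bot => simp
  | coe m =>
    obtain ⟨Y, -, rfl⟩ := mem_image.1 (mem_of_max hmax)
    rw [WithBot.unbotD_coe]
    exact sum_nonneg fun Z _ => ha Z

lemma sum_superset_le_polyMu {ℓ : ℕ} {Y : Finset (Fin n)} (hY : #Y = ℓ) :
    ∑ Z ∈ powersetCard q univ with Y ⊆ Z, a Z ≤ polyMu n q a ℓ := by
  have hmem := mem_image_of_mem (fun Y : Finset (Fin n) =>
    ∑ Z ∈ powersetCard q univ with Y ⊆ Z, a Z) (mem_powersetCard_univ.2 hY)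
  obtain ⟨m, hm⟩ := max_of_mem hmem
  have hle := le_max hmem
  unfold polyMu
  rw [hm] at hle ⊢
  exact WithBot.coe_le_coe.1 hle

variable {a}

lemma sum_card_inter_eq_le (ha : ∀ Z, 0 ≤ a Z) {m : ℕ} {U : Finset (Fin n)} (hU : #U ≤ m)
    (k : ℕ) :
    ∑ Z ∈ powersetCard q univ with #(Z ∩ U) = k, a Z ≤ m.choose k * polyMu n q a k := by
  have hmaps : ∀ Z ∈ {Z ∈ powersetCard q (univ : Finset (Fin n)) | #(Z ∩ U) = k},
      Z ∩ U ∈ powersetCard k U :=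
    fun Z hZ => mem_powersetCard.2 ⟨inter_subset_right, (mem_filter.1 hZ).2⟩
  calc ∑ Z ∈ powersetCard q univ with #(Z ∩ U) = k, a Z
      = ∑ Y ∈ powersetCard k U, ∑ Z ∈ powersetCard q univ with #(Z ∩ U) = k ∧ Z ∩ U = Y,
          a Z := by
        rw [← sum_fiberwise_of_maps_to hmaps]
        simp only [filter_filter]
    _ ≤ ∑ Y ∈ powersetCard k U, polyMu n q a k := by
        refine sum_le_sum fun Y hY => le_trans ?_
          (sum_superset_le_polyMu a (mem_powersetCard.1 hY).2)
        refine sum_le_sum_of_subset_of_nonneg ?_ fun Z _ _ => ha Z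
        refine monotone_filter_right _ fun Z _ hZ => ?_
        rw [← hZ.2]
        exact inter_subset_left
    _ ≤ m.choose k * polyMu n q a k := by
        rw [sum_const, card_powersetCard, nsmul_eq_mul]
        gcongr
        exact polyMu_nonneg a ha k

lemma sum_mul_pow_card_sdiff_le (ha : ∀ Z, 0 ≤ a Z) {p : ℝ} (hp : 0 ≤ p) {m : ℕ}
    {U : Finset (Fin n)} (hU : #U ≤ m) :
    ∑ Z ∈ powersetCard q univ, a Z * p ^ #(Z \ U) ≤
      ∑ k ∈ range (q + 1), (m.choose k : ℝ) * polyMu n q a k * p ^ (q - k) := by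
  have hmaps : ∀ Z ∈ powersetCard q (univ : Finset (Fin n)), #(Z ∩ U) ∈ range (q + 1) :=
    fun Z hZ => mem_range_succ_iff.2 <| (mem_powersetCard.1 hZ).2 ▸ card_le_card inter_subset_left
  rw [← sum_fiberwise_of_maps_to hmaps]
  refine sum_le_sum fun k _ => ?_
  have hsdiff : ∀ Z ∈ {Z ∈ powersetCard q (univ : Finset (Fin n)) | #(Z ∩ U) = k},
      a Z * p ^ #(Z \ U) = a Z * p ^ (q - k) := by
    intro Z hZ
    obtain ⟨hZq, hZk⟩ := mem_filter.1 hZ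
    rw [← (mem_powersetCard.1 hZq).2, ← hZk, ← card_sdiff_add_card_inter Z U, Nat.add_sub_cancel]
  rw [sum_congr rfl hsdiff, ← sum_mul]
  gcongr
  exact sum_card_inter_eq_le ha hU k

lemma sum_prod_cons_mul_pow_card_biUnion_le (ha : ∀ Z, 0 ≤ a Z) {p : ℝ} (hp : 0 ≤ p)
    {m j : ℕ} {Z : Fin j → Finset (Fin n)} (hZ : #(univ.biUnion Z) ≤ m) :
    ∑ z ∈ powersetCard q univ, (∏ i, a ((Fin.cons z Z : Fin (j + 1) → _) i)) *
        p ^ #(univ.biUnion (Fin.cons z Z : Fin (j + 1) → _)) ≤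
      (∏ i, a (Z i)) * p ^ #(univ.biUnion Z) *
        ∑ k ∈ range (q + 1), (m.choose k : ℝ) * polyMu n q a k * p ^ (q - k) := by
  set U := univ.biUnion Z
  simp_rw [Fin.prod_univ_succ, Fin.cons_zero, Fin.cons_succ, biUnion_univ_cons,
    ← card_sdiff_add_card, pow_add]
  calc ∑ z ∈ powersetCard q univ, a z * (∏ i, a (Z i)) * (p ^ #(z \ U) * p ^ #U)
      = (∏ i, a (Z i)) * p ^ #U * ∑ z ∈ powersetCard q univ, a z * p ^ #(z \ U) := by
        rw [mul_sum]
        exact sum_congr rfl fun z _ => by ring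
    _ ≤ _ := by
        have := prod_nonneg fun i (_ : i ∈ univ) => ha (Z i)
        gcongr
        exact sum_mul_pow_card_sdiff_le ha hp hZ

lemma sum_prod_mul_pow_card_biUnion_le (ha : ∀ Z, 0 ≤ a Z) {p : ℝ} (hp : 0 ≤ p) {m j : ℕ}
    (hjm : j * q ≤ m) :
    ∑ Z ∈ Fintype.piFinset (fun _ : Fin j => powersetCard q (univ : Finset (Fin n))),
        (∏ i, a (Z i)) * p ^ #(univ.biUnion Z) ≤
      (∑ k ∈ range (q + 1), (m.choose k : ℝ) * polyMu n q a k * p ^ (q - k)) ^ j := by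
  induction j with
  | zero => simp
  | succ j ih =>
    set B := ∑ k ∈ range (q + 1), (m.choose k : ℝ) * polyMu n q a k * p ^ (q - k)
    have hB : 0 ≤ B := sum_nonneg fun k _ => by
      have := polyMu_nonneg a ha (q := q) k
      positivity
    have hj : j * q ≤ m := (Nat.mul_le_mul_right q j.le_succ).trans hjm
    have hunion : ∀ Z ∈ Fintype.piFinset (fun _ : Fin j => powersetCard q (univ : Finset (Fin n))),
        #(univ.biUnion Z) ≤ m := fun Z hZ =>
      (card_biUnion_le_card_mul _ _ q fun i _ =>
        (mem_powersetCard.1 (Fintype.mem_piFinset.1 hZ i)).2.le).trans (by simpa using hj)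
    rw [Fintype.sum_piFinset_const_succ, sum_comm, pow_succ]
    calc _ ≤ ∑ Z ∈ Fintype.piFinset (fun _ : Fin j => powersetCard q (univ : Finset (Fin n))),
          (∏ i, a (Z i)) * p ^ #(univ.biUnion Z) * B :=
          sum_le_sum fun Z hZ => sum_prod_cons_mul_pow_card_biUnion_le ha hp (hunion Z hZ)
      _ = (∑ Z ∈ Fintype.piFinset (fun _ : Fin j => powersetCard q (univ : Finset (Fin n))),
          (∏ i, a (Z i)) * p ^ #(univ.biUnion Z)) * B := (sum_mul ..).symm
      _ ≤ B ^ j * B := by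
        gcongr
        exact ih hj

end

/-- Proposition 4.1 (Fapp-prop1). -/
theorem stmt0 (n q : ℕ) (a : Finset (Fin n) → ℝ)
    (ha : ∀ Z, 0 ≤ a Z) (w : ℕ) (p : ℝ) (hp : 0 ≤ p) :
    ∑ Z ∈ Fintype.piFinset
        (fun _ : Fin w => Finset.powersetCard q (Finset.univ : Finset (Fin n))),
      (∏ i, a (Z i)) * p ^ (Finset.univ.biUnion fun i => Z i).card ≤
    (∑ k ∈ Finset.range (q + 1),
      ((w * q).choose k : ℝ) * polyMu n q a k * p ^ (q - k)) ^ w :=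
  sum_prod_mul_pow_card_biUnion_le ha hp le_rfl
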